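/- arXiv:math/0302143 — 3 statements merged into one kernel-verified Lean document; each statement's English description precedes it below -/
import Mathlib

section
/- Let i : Z[ζ] → C be an injective ring homomorphism and j : Z[ζ] → K a ring homomorphism into a field K, where Z[ζ] is a ring of cyclotomic integers. Let M be a bounded chain complex of finitely generated free Z[ζ]-modules. Then for every q, dim_C H_q(M ⊗_{Z[ζ], i} C) ≤ dim_K H_q(M ⊗_{Z[ζ], j} K). -/
/-!
Over a field, `dim H_q = n_{q+1} - rank d_q - rank d_{q+1}`, so it suffices to show that base
change along `j` cannot give a larger rank than base change along the injective `i`. The rank of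
a matrix over a field is the size of its largest nonsingular square submatrix; a nonsingular
`r × r` submatrix of `A.map j` has determinant `j (det A')` for an `r × r` submatrix `A'` of `A`,
so `det A' ≠ 0`, hence `i (det A') ≠ 0` and `A.map i` has rank at least `r`.
-/

/-- Cohomology of a two-step piece `M --f--> N --g--> P` of a complex:
`ker g / im f`. -/
abbrev homologyAt {K M N P : Type*} [CommRing K]
    [AddCommGroup M] [AddCommGroup N] [AddCommGroup P]
    [Module K M] [Module K N] [Module K P]
    (f : M →ₗ[K] N) (g : N →ₗ[K] P) :=
  LinearMap.ker g ⧸ (LinearMap.range f).comap (LinearMap.ker g).subtype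

open Module

theorem finrank_homologyAt_add_finrank_range_add_finrank_range {F M N P : Type*} [Field F]
    [AddCommGroup M] [AddCommGroup N] [AddCommGroup P]
    [Module F M] [Module F N] [Module F P] [FiniteDimensional F N]
    (f : M →ₗ[F] N) (g : N →ₗ[F] P) (hgf : g ∘ₗ f = 0) :
    finrank F (homologyAt f g) + finrank F (LinearMap.range f) + finrank F (LinearMap.range g) =
      finrank F N := by
  have hquot := Submodule.finrank_quotient_add_finrank
    ((LinearMap.range f).comap (LinearMap.ker g).subtype)
  have himage :=
    (Submodule.comapSubtypeEquivOfLe (LinearMap.range_le_ker_iff.mpr hgf)).finrank_eq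
  have hrank := LinearMap.finrank_range_add_finrank_ker g
  unfold homologyAt
  omega

namespace Matrix

variable {F m n : Type*} [Field F] [Fintype n]

theorem finrank_homologyAt_toLin'_add_rank_add_rank {l : Type*} [Fintype l] [Fintype m]
    [DecidableEq m] [DecidableEq n] {A : Matrix l m F} {B : Matrix m n F} (hAB : A * B = 0) :
    finrank F (homologyAt (toLin' B) (toLin' A)) + B.rank + A.rank = Fintype.card m := by
  rw [← finrank_pi F]
  exact finrank_homologyAt_add_finrank_range_add_finrank_range _ _
    (by rw [← toLin'_mul, hAB, map_zero])

theorem exists_linearIndependent_rows [Fintype m] (A : Matrix m n F) :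
    ∃ f : Fin A.rank → m, LinearIndependent F (A.submatrix f id).row := by
  obtain ⟨κ, a, ha, hspan, hli⟩ := exists_linearIndependent' F A.row
  have : Fintype κ := Fintype.ofInjective a ha
  have hcard : Fintype.card κ = A.rank := by
    rw [A.rank_eq_finrank_span_row, ← hspan, finrank_span_eq_card hli]
  let e : Fin A.rank ≃ κ := (Fintype.equivFinOfCardEq hcard).symm
  exact ⟨a ∘ e, hli.comp e e.injective⟩

theorem exists_det_submatrix_ne_zero [Fintype m] (A : Matrix m n F) :
    ∃ (f : Fin A.rank → m) (g : Fin A.rank → n), (A.submatrix f g).det ≠ 0 := by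
  obtain ⟨f, hf⟩ := A.exists_linearIndependent_rows
  have hrank : (A.submatrix f id)ᵀ.rank = A.rank := by
    rw [rank_transpose, hf.rank_matrix, Fintype.card_fin]
  obtain ⟨g, hg⟩ := (A.submatrix f id)ᵀ.exists_linearIndependent_rows
  have hcols := hg.comp _ (Fin.cast_injective hrank.symm)
  exact ⟨f, g ∘ Fin.cast hrank.symm,
    ((isUnit_iff_isUnit_det _).mp (linearIndependent_cols_iff_isUnit.mp hcols)).ne_zero⟩

theorem le_rank_of_det_submatrix_ne_zero {r : ℕ} (A : Matrix m n F) (f : Fin r → m)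
    (g : Fin r → n) (h : (A.submatrix f g).det ≠ 0) : r ≤ A.rank :=
  calc r = (A.submatrix f g).rank := by
        rw [rank_of_isUnit _ ((isUnit_iff_isUnit_det _).mpr h.isUnit), Fintype.card_fin]
    _ ≤ A.rank := rank_submatrix_le A f g

theorem rank_map_le_rank_map_of_injective [Fintype m] {R F' : Type*} [CommRing R] [Field F']
    (i : R →+* F) (hi : Function.Injective i) (j : R →+* F') (A : Matrix m n R) :
    (A.map j).rank ≤ (A.map i).rank := by
  obtain ⟨f, g, h⟩ := (A.map j).exists_det_submatrix_ne_zero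
  refine le_rank_of_det_submatrix_ne_zero _ f g ?_
  rw [submatrix_map, ← RingHom.mapMatrix_apply, ← RingHom.map_det] at h ⊢
  exact (map_ne_zero_iff i hi).mpr (ne_zero_of_map h)

end Matrix

theorem homology_dim_base_change_general (R K : Type*) [CommRing R] [Field K]
    (i : R →+* ℂ) (hi : Function.Injective i) (j : R →+* K)
    (n : ℤ → ℕ) (d : ∀ q : ℤ, Matrix (Fin (n q)) (Fin (n (q + 1))) R)
    (hdd : ∀ q : ℤ, d q * d (q + 1) = 0) :
    ∀ q : ℤ,
      Module.finrank ℂ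
          (homologyAt (Matrix.toLin' ((d (q + 1)).map i)) (Matrix.toLin' ((d q).map i))) ≤
      Module.finrank K
          (homologyAt (Matrix.toLin' ((d (q + 1)).map j)) (Matrix.toLin' ((d q).map j))) := by
  intro q
  have hC := Matrix.finrank_homologyAt_toLin'_add_rank_add_rank
    (by rw [← Matrix.map_mul, hdd q, Matrix.map_zero _ (map_zero i)] :
      (d q).map i * (d (q + 1)).map i = 0)
  have hK := Matrix.finrank_homologyAt_toLin'_add_rank_add_rank
    (by rw [← Matrix.map_mul, hdd q, Matrix.map_zero _ (map_zero j)] :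
      (d q).map j * (d (q + 1)).map j = 0)
  have hrank₀ := Matrix.rank_map_le_rank_map_of_injective i hi j (d q)
  have hrank₁ := Matrix.rank_map_le_rank_map_of_injective i hi j (d (q + 1))
  omega

/-- Let `R` (e.g. a ring `ℤ[ζ]` of cyclotomic integers) be an integral domain with an
injective ring homomorphism `i : R → ℂ` and a ring homomorphism `j : R → K` to a field
`K`.  Let `M` be a bounded chain complex of finitely generated free `R`-modules,
presented by matrices `d q` (the boundary map from degree `q+1` to degree `q`).
Then for every `q`, `dim_ℂ H_q(M ⊗_{R,i} ℂ) ≤ dim_K H_q(M ⊗_{R,j} K)`. -/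
theorem homology_dim_base_change (R K : Type*) [CommRing R] [IsDomain R] [Field K]
    (i : R →+* ℂ) (hi : Function.Injective i) (j : R →+* K)
    (n : ℤ → ℕ) (d : ∀ q : ℤ, Matrix (Fin (n q)) (Fin (n (q + 1))) R)
    (hdd : ∀ q : ℤ, d q * d (q + 1) = 0)
    (hbdd : ∃ a b : ℤ, ∀ q : ℤ, q < a ∨ b < q → n q = 0) :
    ∀ q : ℤ,
      Module.finrank ℂ
          (homologyAt (Matrix.toLin' ((d (q + 1)).map i)) (Matrix.toLin' ((d q).map i))) ≤
      Module.finrank K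
          (homologyAt (Matrix.toLin' ((d (q + 1)).map j)) (Matrix.toLin' ((d q).map j))) :=
  homology_dim_base_change_general R K i hi j n d hdd
end

section
/- In the pure braid group P_{2p}, with τ = (σ_2 σ_4 ⋯ σ_{2p−2})(σ_3 σ_5 ⋯ σ_{2p−3}) ⋯ (σ_{p−1} σ_{p+1})(σ_p), conjugation by τ sends the full twist A_{[p]} = A_{1,2}(A_{1,3}A_{2,3})⋯(A_{1,p}⋯A_{p−1,p}) on strands 1,…,p to the product A_{1,3}(A_{1,5}A_{3,5})⋯(A_{1,2p−1}A_{3,2p−1}⋯A_{2p−3,2p−1}) of twists on the odd-numbered strands: τ A_{[p]} τ^{−1} = A_{O[p]} where O[p] = {1,3,…,2p−1}. -/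
/-- The braid relations on `n` generators `σ_1, …, σ_n` (presented on the index type
`Fin n`, with `⟨i, _⟩` standing for `σ_{i+1}`): distant generators commute, and
adjacent generators satisfy the braid relation. -/
def braidRels (n : ℕ) : Set (FreeGroup (Fin n)) :=
  {r | (∃ i j : Fin n, (i : ℕ) + 1 < (j : ℕ) ∧
          r = .of i * .of j * (.of i)⁻¹ * (.of j)⁻¹) ∨
       (∃ i j : Fin n, (j : ℕ) = (i : ℕ) + 1 ∧
          r = .of i * .of j * .of i * (.of j * .of i * .of j)⁻¹)}

/-- The braid group `B_{2p}` on `2p` strands, presented with generators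
`σ_1, …, σ_{2p−1}` and the braid relations. -/
abbrev BraidGroup (p : ℕ) := PresentedGroup (braidRels (2 * p - 1))

/-- The standard generator `σ_i` of `B_{2p}` (for `1 ≤ i ≤ 2p−1`; junk value `1`
otherwise). -/
def σ (p i : ℕ) : BraidGroup p :=
  if h : 1 ≤ i ∧ i ≤ 2 * p - 1 then PresentedGroup.of ⟨i - 1, by omega⟩ else 1

/-- The word `σ_{j−1} σ_{j−2} ⋯ σ_{i+1}` used to define the band generators. -/
def bandWord (p i j : ℕ) : BraidGroup p :=
  ((List.range (j - 1 - i)).map (fun t => σ p (j - 1 - t))).prod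

/-- The standard pure braid generator
`A_{i,j} = (σ_{j−1} ⋯ σ_{i+1}) σ_i² (σ_{j−1} ⋯ σ_{i+1})⁻¹`. -/
def A (p i j : ℕ) : BraidGroup p :=
  bandWord p i j * (σ p i) ^ 2 * (bandWord p i j)⁻¹

/-- The braid `τ = (σ_2 σ_4 ⋯ σ_{2p−2})(σ_3 σ_5 ⋯ σ_{2p−3}) ⋯ (σ_{p−1} σ_{p+1})(σ_p)`:
the product over `ℓ = 2, …, p` of the blocks `σ_ℓ σ_{ℓ+2} ⋯ σ_{2p−ℓ}`. -/
def τ (p : ℕ) : BraidGroup p :=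
  ((List.range (p - 1)).map (fun a =>
    ((List.range (p - (a + 2) + 1)).map (fun t => σ p (a + 2 + 2 * t))).prod)).prod

/-- The full twist `A_{[p]} = A_{1,2}(A_{1,3}A_{2,3}) ⋯ (A_{1,p} ⋯ A_{p−1,p})` on
strands `1, …, p`. -/
def fullTwist (p : ℕ) : BraidGroup p :=
  ((List.range (p - 1)).map (fun b =>
    ((List.range (b + 1)).map (fun i => A p (i + 1) (b + 2))).prod)).prod

/-- The product `A_{O[p]} = A_{1,3}(A_{1,5}A_{3,5}) ⋯ (A_{1,2p−1} ⋯ A_{2p−3,2p−1})` of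
twists on the odd-numbered strands `O[p] = {1, 3, …, 2p−1}`. -/
def oddTwist (p : ℕ) : BraidGroup p :=
  ((List.range (p - 1)).map (fun b =>
    ((List.range (b + 1)).map (fun i => A p (2 * (i + 1) - 1) (2 * (b + 2) - 1))).prod)).prod

/-! ### Auxiliary machinery -/

section Aux

variable {p : ℕ}

private lemma rel_one {n : ℕ} {r : FreeGroup (Fin n)} (h : r ∈ braidRels n) :
    PresentedGroup.mk (braidRels n) r = 1 :=
  (QuotientGroup.eq_one_iff _).mpr (Subgroup.subset_normalClosure h)

/-- Distant generators commute (including junk values). -/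
lemma sigma_comm {k m : ℕ} (h : k + 2 ≤ m) : Commute (σ p k) (σ p m) := by
  unfold σ
  split_ifs with hk hm hm
  · have hr : (FreeGroup.of (⟨k - 1, by omega⟩ : Fin (2 * p - 1)) *
        FreeGroup.of (⟨m - 1, by omega⟩ : Fin (2 * p - 1)) *
        (FreeGroup.of (⟨k - 1, by omega⟩ : Fin (2 * p - 1)))⁻¹ *
        (FreeGroup.of (⟨m - 1, by omega⟩ : Fin (2 * p - 1)))⁻¹) ∈ braidRels (2 * p - 1) :=
      Or.inl ⟨⟨k - 1, by omega⟩, ⟨m - 1, by omega⟩, by simp; omega, rfl⟩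
    have h1 := rel_one hr
    simp only [map_mul, map_inv] at h1
    have h2 : PresentedGroup.of (rels := braidRels (2 * p - 1)) ⟨k - 1, by omega⟩ *
        PresentedGroup.of ⟨m - 1, by omega⟩ =
        PresentedGroup.of ⟨m - 1, by omega⟩ * PresentedGroup.of ⟨k - 1, by omega⟩ :=
      commutatorElement_eq_one_iff_mul_comm.mp (by rw [commutatorElement_def]; exact h1)
    exact h2
  · exact Commute.one_right _
  · exact Commute.one_left _
  · exact Commute.one_left _

/-- The braid relation for valid adjacent generators. -/
lemma braid_rel {k : ℕ} (h1 : 1 ≤ k) (h2 : k + 1 ≤ 2 * p - 1) :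
    σ p k * σ p (k + 1) * σ p k = σ p (k + 1) * σ p k * σ p (k + 1) := by
  have hk : (1 ≤ k ∧ k ≤ 2 * p - 1) := ⟨h1, by omega⟩
  have hk1 : (1 ≤ k + 1 ∧ k + 1 ≤ 2 * p - 1) := ⟨by omega, h2⟩
  rw [σ, σ, dif_pos hk, dif_pos hk1]
  have hr : (FreeGroup.of (⟨k - 1, by omega⟩ : Fin (2 * p - 1)) *
      FreeGroup.of (⟨k + 1 - 1, by omega⟩ : Fin (2 * p - 1)) *
      FreeGroup.of (⟨k - 1, by omega⟩ : Fin (2 * p - 1)) *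
      (FreeGroup.of (⟨k + 1 - 1, by omega⟩ : Fin (2 * p - 1)) *
       FreeGroup.of (⟨k - 1, by omega⟩ : Fin (2 * p - 1)) *
       FreeGroup.of (⟨k + 1 - 1, by omega⟩ : Fin (2 * p - 1)))⁻¹) ∈ braidRels (2 * p - 1) :=
    Or.inr ⟨⟨k - 1, by omega⟩, ⟨k + 1 - 1, by omega⟩, by simp; omega, rfl⟩
  have h1 := rel_one hr
  simp only [map_mul, map_inv] at h1
  exact mul_inv_eq_one.mp h1

/-- `chain p i j = σ_{j-1} σ_{j-2} ⋯ σ_{i+1}` (equal to `bandWord`). -/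
def chain (p i : ℕ) : ℕ → BraidGroup p
  | 0 => 1
  | j + 1 => if i + 1 ≤ j then σ p j * chain p i j else 1

lemma chain_succ {i j : ℕ} (h : i + 1 ≤ j) : chain p i (j + 1) = σ p j * chain p i j := by
  simp [chain, h]

lemma chain_eq_one {i j : ℕ} (h : j ≤ i + 1) : chain p i j = 1 := by
  cases j with
  | zero => rfl
  | succ j => simp [chain, show ¬ (i + 1 ≤ j) by omega]

private lemma range_map_prod_succ {M : Type*} [Monoid M] (f : ℕ → M) (n : ℕ) :
    ((List.range (n + 1)).map f).prod = f 0 * ((List.range n).map (fun t => f (t + 1))).prod := by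
  rw [List.range_succ_eq_map, List.map_cons, List.prod_cons, List.map_map]
  rfl

lemma bandWord_eq_chain (i j : ℕ) : bandWord p i j = chain p i j := by
  induction j with
  | zero => simp [bandWord, chain, Nat.zero_sub]
  | succ j ih =>
    by_cases h : i + 1 ≤ j
    · have hc : j + 1 - 1 - i = (j - 1 - i) + 1 := by omega
      rw [bandWord, hc, range_map_prod_succ, chain_succ h, ← ih, bandWord]
      have : (fun t => σ p (j + 1 - 1 - (t + 1))) = fun t => σ p (j - 1 - t) := by
        funext t; congr 1; omega
      rw [this, show j + 1 - 1 - 0 = j by omega]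
    · rw [chain_eq_one (by omega), bandWord, show j + 1 - 1 - i = 0 by omega]
      rfl

lemma A_eq (i j : ℕ) : A p i j = chain p i j * (σ p i) ^ 2 * (chain p i j)⁻¹ := by
  rw [A, bandWord_eq_chain]

/-- `σ_k` commutes with `chain i j` when `k ≤ i - 1`. -/
lemma chain_comm_low {k i j : ℕ} (h : k + 1 ≤ i) : Commute (σ p k) (chain p i j) := by
  induction j with
  | zero => exact Commute.one_right _
  | succ j ih =>
    by_cases hj : i + 1 ≤ j
    · rw [chain_succ hj]; exact (sigma_comm (by omega)).mul_right ih
    · rw [chain_eq_one (by omega)]; exact Commute.one_right _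

/-- `σ_k` commutes with `chain i j` when `k ≥ j + 1`. -/
lemma chain_comm_high {k i j : ℕ} (h : j + 1 ≤ k) : Commute (σ p k) (chain p i j) := by
  induction j with
  | zero => exact Commute.one_right _
  | succ j ih =>
    by_cases hj : i + 1 ≤ j
    · rw [chain_succ hj]
      exact ((sigma_comm (m := k) (by omega)).symm).mul_right (ih (by omega))
    · rw [chain_eq_one (by omega)]; exact Commute.one_right _

/-- Sliding a middle generator through the chain: `σ_k ⬝ chain = chain ⬝ σ_{k+1}`. -/
lemma chain_slide {k i j : ℕ} (hi : i + 1 ≤ k) (hk : k + 2 ≤ j) (hv : k + 1 ≤ 2 * p - 1) :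
    σ p k * chain p i j = chain p i j * σ p (k + 1) := by
  induction j with
  | zero => omega
  | succ j ih =>
    by_cases hj : k + 2 ≤ j
    · -- step case : letter σ_j with j ≥ k+2 commutes with σ_k
      rw [chain_succ (by omega)]
      calc σ p k * (σ p j * chain p i j)
          = (σ p k * σ p j) * chain p i j := by group
        _ = (σ p j * σ p k) * chain p i j := by rw [(sigma_comm hj).eq]
        _ = σ p j * (σ p k * chain p i j) := by group
        _ = σ p j * (chain p i j * σ p (k + 1)) := by rw [ih hj]
        _ = σ p j * chain p i j * σ p (k + 1) := by group
    · -- base case : j = k + 1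
      have hjk : j = k + 1 := by omega
      subst hjk
      rw [chain_succ (by omega), chain_succ (by omega)]
      have hb := braid_rel (p := p) (k := k) (by omega) hv
      have hcomm : Commute (σ p (k + 1)) (chain p i k) := chain_comm_high (by omega)
      calc σ p k * (σ p (k + 1) * (σ p k * chain p i k))
          = (σ p k * σ p (k + 1) * σ p k) * chain p i k := by group
        _ = (σ p (k + 1) * σ p k * σ p (k + 1)) * chain p i k := by rw [hb]
        _ = σ p (k + 1) * σ p k * (σ p (k + 1) * chain p i k) := by group
        _ = σ p (k + 1) * σ p k * (chain p i k * σ p (k + 1)) := by rw [hcomm.eq]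
        _ = σ p (k + 1) * (σ p k * chain p i k) * σ p (k + 1) := by group

/-- Removing the innermost letter: `chain i j = chain (i+1) j ⬝ σ_{i+1}`. -/
lemma chain_lower {i j : ℕ} (h : i + 2 ≤ j) :
    chain p i j = chain p (i + 1) j * σ p (i + 1) := by
  induction j with
  | zero => omega
  | succ j ih =>
    by_cases hj : i + 2 ≤ j
    · rw [chain_succ (by omega), chain_succ (by omega), ih hj, mul_assoc]
    · have : j = i + 1 := by omega
      subst this
      rw [chain_succ (by omega), chain_eq_one (p := p) (i := i) (j := i + 1) le_rfl,
        chain_eq_one (p := p) (i := i + 1) (j := i + 2) (by omega)]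
      simp

/-- `σ_k` commutes with `A i j` when `k + 2 ≤ i`. -/
lemma A_comm_low {k i j : ℕ} (h : k + 2 ≤ i) : Commute (σ p k) (A p i j) := by
  rw [A_eq]
  exact ((chain_comm_low (by omega)).mul_right
    ((sigma_comm (by omega)).pow_right 2)).mul_right (chain_comm_low (by omega)).inv_right

/-- `σ_k` commutes with `A i j` when `k ≥ j + 1`, provided `i < j`. -/
lemma A_comm_high {k i j : ℕ} (hij : i + 1 ≤ j) (h : j + 1 ≤ k) : Commute (σ p k) (A p i j) := by
  rw [A_eq]
  exact ((chain_comm_high (by omega)).mul_right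
    (((sigma_comm (k := i) (m := k) (by omega)).symm).pow_right 2)).mul_right
    (chain_comm_high (by omega)).inv_right

/-- `σ_k` commutes with `A i j` when `i + 1 ≤ k ≤ j - 2`. -/
lemma A_comm_mid {k i j : ℕ} (hi : i + 1 ≤ k) (hj : k + 2 ≤ j) (hv : k + 1 ≤ 2 * p - 1) :
    Commute (σ p k) (A p i j) := by
  have hs := chain_slide (p := p) (i := i) (j := j) hi hj hv
  have hpow : Commute (σ p (k + 1)) ((σ p i) ^ 2) :=
    ((sigma_comm (k := i) (m := k + 1) (by omega)).symm).pow_right 2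
  have h2 : σ p (k + 1) * (chain p i j)⁻¹ = (chain p i j)⁻¹ * σ p k := by
    calc σ p (k + 1) * (chain p i j)⁻¹
        = (chain p i j)⁻¹ * (chain p i j * σ p (k + 1)) * (chain p i j)⁻¹ := by group
      _ = (chain p i j)⁻¹ * (σ p k * chain p i j) * (chain p i j)⁻¹ := by rw [hs]
      _ = (chain p i j)⁻¹ * σ p k := by group
  have hgoal : σ p k * A p i j = A p i j * σ p k := by
    rw [A_eq]
    calc σ p k * (chain p i j * σ p i ^ 2 * (chain p i j)⁻¹)
        = (σ p k * chain p i j) * σ p i ^ 2 * (chain p i j)⁻¹ := by group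
      _ = (chain p i j * σ p (k + 1)) * σ p i ^ 2 * (chain p i j)⁻¹ := by rw [hs]
      _ = chain p i j * ((σ p (k + 1) * σ p i ^ 2) * (chain p i j)⁻¹) := by group
      _ = chain p i j * ((σ p i ^ 2 * σ p (k + 1)) * (chain p i j)⁻¹) := by rw [hpow.eq]
      _ = chain p i j * σ p i ^ 2 * (σ p (k + 1) * (chain p i j)⁻¹) := by group
      _ = chain p i j * σ p i ^ 2 * ((chain p i j)⁻¹ * σ p k) := by rw [h2]
      _ = chain p i j * σ p i ^ 2 * (chain p i j)⁻¹ * σ p k := by group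
  exact hgoal


/-- Conjugating by `σ_j` raises the upper index: `σ_j A_{i,j} σ_j⁻¹ = A_{i,j+1}`. -/
lemma A_R1 {i j : ℕ} (h : i + 1 ≤ j) : σ p j * A p i j * (σ p j)⁻¹ = A p i (j + 1) := by
  rw [A_eq, A_eq, chain_succ h]
  group

/-- Conjugating by `σ_i` raises the lower index: `σ_i A_{i,j} σ_i⁻¹ = A_{i+1,j}`. -/
lemma A_R2 {i j : ℕ} (h1 : 1 ≤ i) (hij : i + 2 ≤ j) (hv : i + 1 ≤ 2 * p - 1) :
    σ p i * A p i j * (σ p i)⁻¹ = A p (i + 1) j := by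
  have hcl : Commute (σ p i) (chain p (i + 1) j) := chain_comm_low (by omega)
  have hcl2 : Commute ((chain p (i + 1) j)⁻¹) ((σ p i)⁻¹) := (hcl.symm.inv_left).inv_right
  have hb := braid_rel (p := p) (k := i) h1 hv
  set a := σ p i with ha
  set c := σ p (i + 1) with hc
  set w := chain p (i + 1) j with hw
  have binv : c⁻¹ * a⁻¹ * c⁻¹ = a⁻¹ * c⁻¹ * a⁻¹ := by
    have h3 : (a * c * a)⁻¹ = (c * a * c)⁻¹ := by rw [hb]
    calc c⁻¹ * a⁻¹ * c⁻¹ = (c * a * c)⁻¹ := by group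
      _ = (a * c * a)⁻¹ := h3.symm
      _ = a⁻¹ * c⁻¹ * a⁻¹ := by group
  have k2 : a * c⁻¹ * a⁻¹ = c⁻¹ * a⁻¹ * c := by
    calc a * c⁻¹ * a⁻¹ = a * (c⁻¹ * a⁻¹ * c⁻¹) * c := by group
      _ = a * (a⁻¹ * c⁻¹ * a⁻¹) * c := by rw [binv]
      _ = c⁻¹ * a⁻¹ * c := by group
  have key : a * c * a ^ 2 * c⁻¹ * a⁻¹ = c ^ 2 := by
    rw [pow_two, pow_two]
    calc a * c * (a * a) * c⁻¹ * a⁻¹ = (a * c * a) * (a * c⁻¹ * a⁻¹) := by group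
      _ = (c * a * c) * (a * c⁻¹ * a⁻¹) := by rw [hb]
      _ = (c * a * c) * (c⁻¹ * a⁻¹ * c) := by rw [k2]
      _ = c * c := by group
  rw [A_eq, A_eq, chain_lower hij, ← hw, ← ha, ← hc]
  calc a * (w * c * a ^ 2 * (w * c)⁻¹) * a⁻¹
      = (a * w) * (c * a ^ 2 * c⁻¹ * w⁻¹ * a⁻¹) := by group
    _ = (w * a) * (c * a ^ 2 * c⁻¹ * w⁻¹ * a⁻¹) := by rw [hcl.eq]
    _ = w * (a * c * a ^ 2 * c⁻¹) * (w⁻¹ * a⁻¹) := by group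
    _ = w * (a * c * a ^ 2 * c⁻¹) * (a⁻¹ * w⁻¹) := by rw [hcl2.eq]
    _ = w * (a * c * a ^ 2 * c⁻¹ * a⁻¹) * w⁻¹ := by group
    _ = w * c ^ 2 * w⁻¹ := by rw [key]

/-- `pchain p ℓ n = σ_ℓ σ_{ℓ+2} ⋯ σ_{ℓ+2(n-1)}`. -/
def pchain (p : ℕ) : ℕ → ℕ → BraidGroup p
  | _, 0 => 1
  | ℓ, n + 1 => σ p ℓ * pchain p (ℓ + 2) n

lemma pchain_succ (ℓ n : ℕ) : pchain p ℓ (n + 1) = σ p ℓ * pchain p (ℓ + 2) n := rfl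

lemma pchain_append (m n ℓ : ℕ) :
    pchain p ℓ (m + n) = pchain p ℓ m * pchain p (ℓ + 2 * m) n := by
  induction m generalizing ℓ with
  | zero => simp [pchain]
  | succ m ih =>
    rw [show m + 1 + n = (m + n) + 1 by omega, pchain_succ, pchain_succ, ih,
      show ℓ + 2 + 2 * m = ℓ + 2 * (m + 1) by omega, mul_assoc]

lemma pchain_comm_A_high {ℓ n i j : ℕ} (hij : i + 1 ≤ j) (h : j + 1 ≤ ℓ) :
    Commute (pchain p ℓ n) (A p i j) := by
  induction n generalizing ℓ with
  | zero => exact Commute.one_left _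
  | succ n ih => exact (A_comm_high hij h).mul_left (ih (by omega))

lemma pchain_comm_A_low {ℓ n i j : ℕ} (h : ℓ + 2 * n ≤ i) :
    Commute (pchain p ℓ n) (A p i j) := by
  induction n generalizing ℓ with
  | zero => exact Commute.one_left _
  | succ n ih => exact (A_comm_low (by omega)).mul_left (ih (by omega))

lemma pchain_comm_A_mid {ℓ n i j : ℕ} (hi : i + 1 ≤ ℓ) (hj : ℓ + 2 * n ≤ j)
    (hv : j ≤ 2 * p) : Commute (pchain p ℓ n) (A p i j) := by
  induction n generalizing ℓ with
  | zero => exact Commute.one_left _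
  | succ n ih =>
    exact (A_comm_mid hi (by omega) (by omega)).mul_left (ih (by omega) (by omega))

/-- Block conjugation, case A : both strands to the left of the block. -/
lemma blk_conj_A {ℓ i j : ℕ} (hij : i + 1 ≤ j) (hjl : j + 1 ≤ ℓ) :
    pchain p ℓ (p - ℓ + 1) * A p i j * (pchain p ℓ (p - ℓ + 1))⁻¹ = A p i j := by
  have h : Commute (pchain p ℓ (p - ℓ + 1)) (A p i j) := pchain_comm_A_high hij hjl
  rw [h.eq]; group

/-- Block conjugation, case B : only the upper strand meets the block. -/
lemma blk_conj_B {ℓ i j : ℕ} (hil : i + 1 ≤ ℓ) (hlj : ℓ ≤ j) (hjp : j ≤ p)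
    (hi1 : 1 ≤ i) (hl2 : 2 ≤ ℓ) :
    pchain p ℓ (p - ℓ + 1) * A p i (2 * j - ℓ) * (pchain p ℓ (p - ℓ + 1))⁻¹ =
      A p i (2 * j - ℓ + 1) := by
  rw [show p - ℓ + 1 = (j - ℓ) + ((p - j) + 1) by omega, pchain_append,
    show ℓ + 2 * (j - ℓ) = 2 * j - ℓ by omega, pchain_succ]
  set P := pchain p ℓ (j - ℓ) with hP'
  set Q := pchain p (2 * j - ℓ + 2) (p - j) with hQ'
  set s := σ p (2 * j - ℓ) with hs'
  have hQ : Commute Q (A p i (2 * j - ℓ)) := pchain_comm_A_high (by omega) (by omega)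
  have hR1 : s * A p i (2 * j - ℓ) * s⁻¹ = A p i (2 * j - ℓ + 1) := A_R1 (by omega)
  have hP : Commute P (A p i (2 * j - ℓ + 1)) :=
    pchain_comm_A_mid (by omega) (by omega) (by omega)
  calc P * (s * Q) * A p i (2 * j - ℓ) * (P * (s * Q))⁻¹
      = P * s * (Q * A p i (2 * j - ℓ)) * Q⁻¹ * s⁻¹ * P⁻¹ := by group
    _ = P * s * (A p i (2 * j - ℓ) * Q) * Q⁻¹ * s⁻¹ * P⁻¹ := by rw [hQ.eq]
    _ = P * (s * A p i (2 * j - ℓ) * s⁻¹) * P⁻¹ := by group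
    _ = P * A p i (2 * j - ℓ + 1) * P⁻¹ := by rw [hR1]
    _ = A p i (2 * j - ℓ + 1) * P * P⁻¹ := by rw [hP.eq]
    _ = A p i (2 * j - ℓ + 1) := by group

/-- Block conjugation, case C : both strands meet the block. -/
lemma blk_conj_C {ℓ i j : ℕ} (hli : ℓ ≤ i) (hij : i + 1 ≤ j) (hjp : j ≤ p) (hl2 : 2 ≤ ℓ) :
    pchain p ℓ (p - ℓ + 1) * A p (2 * i - ℓ) (2 * j - ℓ) * (pchain p ℓ (p - ℓ + 1))⁻¹ =
      A p (2 * i - ℓ + 1) (2 * j - ℓ + 1) := by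
  rw [show p - ℓ + 1 = (i - ℓ) + (((j - i - 1) + ((p - j) + 1)) + 1) by omega, pchain_append,
    show ℓ + 2 * (i - ℓ) = 2 * i - ℓ by omega, pchain_succ, pchain_append,
    show 2 * i - ℓ + 2 + 2 * (j - i - 1) = 2 * j - ℓ by omega, pchain_succ]
  set P := pchain p ℓ (i - ℓ) with hP'
  set M := pchain p (2 * i - ℓ + 2) (j - i - 1) with hM'
  set Q := pchain p (2 * j - ℓ + 2) (p - j) with hQ'
  set s := σ p (2 * i - ℓ) with hs'
  set t := σ p (2 * j - ℓ) with ht'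
  have hQ : Commute Q (A p (2 * i - ℓ) (2 * j - ℓ)) := pchain_comm_A_high (by omega) (by omega)
  have hR1 : t * A p (2 * i - ℓ) (2 * j - ℓ) * t⁻¹ = A p (2 * i - ℓ) (2 * j - ℓ + 1) :=
    A_R1 (by omega)
  have hM : Commute M (A p (2 * i - ℓ) (2 * j - ℓ + 1)) :=
    pchain_comm_A_mid (by omega) (by omega) (by omega)
  have hR2 : s * A p (2 * i - ℓ) (2 * j - ℓ + 1) * s⁻¹ = A p (2 * i - ℓ + 1) (2 * j - ℓ + 1) :=
    A_R2 (by omega) (by omega) (by omega)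
  have hP : Commute P (A p (2 * i - ℓ + 1) (2 * j - ℓ + 1)) := pchain_comm_A_low (by omega)
  calc P * (s * (M * (t * Q))) * A p (2 * i - ℓ) (2 * j - ℓ) * (P * (s * (M * (t * Q))))⁻¹
      = P * s * M * t * (Q * A p (2 * i - ℓ) (2 * j - ℓ)) * Q⁻¹ * t⁻¹ * M⁻¹ * s⁻¹ * P⁻¹ := by
        group
    _ = P * s * M * t * (A p (2 * i - ℓ) (2 * j - ℓ) * Q) * Q⁻¹ * t⁻¹ * M⁻¹ * s⁻¹ * P⁻¹ := by
        rw [hQ.eq]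
    _ = P * s * M * (t * A p (2 * i - ℓ) (2 * j - ℓ) * t⁻¹) * M⁻¹ * s⁻¹ * P⁻¹ := by group
    _ = P * s * (M * A p (2 * i - ℓ) (2 * j - ℓ + 1)) * M⁻¹ * s⁻¹ * P⁻¹ := by
        rw [hR1]; group
    _ = P * s * (A p (2 * i - ℓ) (2 * j - ℓ + 1) * M) * M⁻¹ * s⁻¹ * P⁻¹ := by rw [hM.eq]
    _ = P * (s * A p (2 * i - ℓ) (2 * j - ℓ + 1) * s⁻¹) * P⁻¹ := by group
    _ = P * A p (2 * i - ℓ + 1) (2 * j - ℓ + 1) * P⁻¹ := by rw [hR2]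
    _ = A p (2 * i - ℓ + 1) (2 * j - ℓ + 1) * P * P⁻¹ := by rw [hP.eq]
    _ = A p (2 * i - ℓ + 1) (2 * j - ℓ + 1) := by group

/-- The suffix `T_ℓ T_{ℓ+1} ⋯ T_{ℓ+n-1}` of the product of blocks. -/
def suffW (p : ℕ) : ℕ → ℕ → BraidGroup p
  | _, 0 => 1
  | ℓ, n + 1 => pchain p ℓ (p - ℓ + 1) * suffW p (ℓ + 1) n

/-- Position of strand `m` after the blocks `T_p, …, T_{t+1}` have acted. -/
def posf (m t : ℕ) : ℕ := if m ≤ t then m else 2 * m - t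

lemma posf_of_le {m t : ℕ} (h : m ≤ t) : posf m t = m := if_pos h

lemma posf_ge {m t : ℕ} (h : t ≤ m) : posf m t = 2 * m - t := by
  by_cases h2 : m ≤ t
  · rw [posf_of_le h2]; omega
  · exact if_neg h2

lemma suffW_conj_A : ∀ n ℓ i j : ℕ, ℓ + n = p + 1 → 2 ≤ ℓ → 1 ≤ i → i + 1 ≤ j → j ≤ p →
    suffW p ℓ n * A p i j * (suffW p ℓ n)⁻¹ = A p (posf i (ℓ - 1)) (posf j (ℓ - 1)) := by
  intro n
  induction n with
  | zero =>
    intro ℓ i j hl h2 hi hij hj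
    have hℓ : ℓ = p + 1 := by omega
    subst hℓ
    rw [posf_of_le (show i ≤ p + 1 - 1 by omega), posf_of_le (show j ≤ p + 1 - 1 by omega)]
    show 1 * A p i j * 1⁻¹ = A p i j
    group
  | succ n ih =>
    intro ℓ i j hl h2 hi hij hj
    have hlp : ℓ ≤ p := by omega
    have hIH := ih (ℓ + 1) i j (by omega) (by omega) hi hij hj
    rw [show ℓ + 1 - 1 = ℓ by omega] at hIH
    show pchain p ℓ (p - ℓ + 1) * suffW p (ℓ + 1) n * A p i j *
      (pchain p ℓ (p - ℓ + 1) * suffW p (ℓ + 1) n)⁻¹ = _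
    set W := suffW p (ℓ + 1) n with hW'
    set B := pchain p ℓ (p - ℓ + 1) with hB'
    have key : B * A p (posf i ℓ) (posf j ℓ) * B⁻¹ = A p (posf i (ℓ - 1)) (posf j (ℓ - 1)) := by
      by_cases hjl : j < ℓ
      · rw [posf_of_le (show i ≤ ℓ by omega), posf_of_le (show j ≤ ℓ by omega),
          posf_of_le (show i ≤ ℓ - 1 by omega), posf_of_le (show j ≤ ℓ - 1 by omega)]
        exact blk_conj_A hij (by omega)
      · by_cases hil : i < ℓ
        · rw [posf_of_le (show i ≤ ℓ by omega), posf_ge (show ℓ ≤ j by omega),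
            posf_of_le (show i ≤ ℓ - 1 by omega), posf_ge (show ℓ - 1 ≤ j by omega),
            show 2 * j - (ℓ - 1) = 2 * j - ℓ + 1 by omega]
          exact blk_conj_B (by omega) (by omega) hj hi h2
        · rw [posf_ge (show ℓ ≤ i by omega), posf_ge (show ℓ ≤ j by omega),
            posf_ge (show ℓ - 1 ≤ i by omega), posf_ge (show ℓ - 1 ≤ j by omega),
            show 2 * i - (ℓ - 1) = 2 * i - ℓ + 1 by omega,
            show 2 * j - (ℓ - 1) = 2 * j - ℓ + 1 by omega]
          exact blk_conj_C (by omega) hij hj h2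
    calc B * W * A p i j * (B * W)⁻¹
        = B * (W * A p i j * W⁻¹) * B⁻¹ := by group
      _ = B * A p (posf i ℓ) (posf j ℓ) * B⁻¹ := by rw [hIH]
      _ = A p (posf i (ℓ - 1)) (posf j (ℓ - 1)) := key

lemma inner_eq : ∀ n c : ℕ,
    ((List.range n).map (fun t => σ p (c + 2 * t))).prod = pchain p c n := by
  intro n
  induction n with
  | zero => intro c; simp [pchain]
  | succ n ih =>
    intro c
    rw [range_map_prod_succ, pchain_succ]
    have h1 : (fun t => σ p (c + 2 * (t + 1))) = fun t => σ p (c + 2 + 2 * t) := by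
      funext t; congr 1; omega
    rw [h1, ih (c + 2), show c + 2 * 0 = c by omega]

lemma outer_eq : ∀ n ℓ : ℕ,
    ((List.range n).map (fun a => pchain p (a + ℓ) (p - (a + ℓ) + 1))).prod = suffW p ℓ n := by
  intro n
  induction n with
  | zero => intro ℓ; rfl
  | succ n ih =>
    intro ℓ
    rw [range_map_prod_succ]
    have h1 : (fun a => pchain p (a + 1 + ℓ) (p - (a + 1 + ℓ) + 1)) =
        fun a => pchain p (a + (ℓ + 1)) (p - (a + (ℓ + 1)) + 1) := by
      funext a; congr 1 <;> omega
    rw [h1, ih (ℓ + 1), show (0 : ℕ) + ℓ = ℓ by omega]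
    rfl

lemma tau_eq (_hp1 : 1 ≤ p) : τ p = suffW p 2 (p - 1) := by
  rw [τ]
  have h1 : ∀ a ∈ List.range (p - 1),
      ((List.range (p - (a + 2) + 1)).map (fun t => σ p (a + 2 + 2 * t))).prod =
        pchain p (a + 2) (p - (a + 2) + 1) := fun a _ => inner_eq _ _
  rw [List.map_congr_left h1, outer_eq (p - 1) 2]

lemma conj_A_final {i j : ℕ} (hp : 2 ≤ p) (hi : 1 ≤ i) (hij : i + 1 ≤ j) (hj : j ≤ p) :
    τ p * A p i j * (τ p)⁻¹ = A p (2 * i - 1) (2 * j - 1) := by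
  rw [tau_eq (by omega), suffW_conj_A (p - 1) 2 i j (by omega) le_rfl hi hij hj,
    posf_ge (show 2 - 1 ≤ i by omega), posf_ge (show 2 - 1 ≤ j by omega)]

lemma conj_prod {G : Type*} [Group G] (g : G) (l : List G) :
    g * l.prod * g⁻¹ = (l.map (fun x => g * x * g⁻¹)).prod := by
  induction l with
  | nil => simp
  | cons a l ih =>
    simp only [List.prod_cons, List.map_cons]
    rw [← ih]; group

end Aux

/-- In the braid group `B_{2p}` (hence in the pure braid group `P_{2p}`), conjugation
by `τ` carries the full twist on strands `1, …, p` to the full twist on the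
odd-numbered strands: `τ A_{[p]} τ⁻¹ = A_{O[p]}`. -/
theorem conj_fullTwist_eq_oddTwist (p : ℕ) (hp : 2 ≤ p) :
    τ p * fullTwist p * (τ p)⁻¹ = oddTwist p := by
  rw [fullTwist, oddTwist, conj_prod, List.map_map]
  congr 1
  apply List.map_congr_left
  intro b hb
  rw [List.mem_range] at hb
  show τ p * ((List.range (b + 1)).map (fun i => A p (i + 1) (b + 2))).prod * (τ p)⁻¹ = _
  rw [conj_prod, List.map_map]
  congr 1
  apply List.map_congr_left
  intro i hi
  rw [List.mem_range] at hi
  show τ p * A p (i + 1) (b + 2) * (τ p)⁻¹ = _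
  rw [conj_A_final hp (by omega) (by omega) (by omega)]
end

section
/- Let p be an odd prime and let P, Q, L be the p×p integer matrices defined by L_{i,j} = δ_{i,j+1}, Q_{i,j} = (−1)^{j+1}, and P_{i,j} = (−1)^j if i is odd and j > i, P_{i,j} = (−1)^{j+1} if i is even and j ≤ i, and P_{i,j} = 0 otherwise. Then the 2p×2p block matrix 2·[[I_p, P],[L − I_p, Q]] has Smith normal form over Z equal to the diagonal matrix with entries 2, 2, …, 2 (2p − 1 times) and 2p. -/
/-!
Eliminating the off-diagonal blocks of `[[1, P], [L - 1, Q]]` leaves `1 ⊕ S` with the Schur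
complement `S = Q - (L - 1) P`, and a direct computation gives `S = D + 2 w vᵀ`, where
`D = diag((-1)^i)`, `v = ((-1)^j)` and `w` is the indicator of the odd (0-based) indices.
Hence `D S = 1 - 2 w vᵀ` is a rank-one perturbation of the identity. Because `w` has the
entry `1` at index `1`, a transvection moves `w` to the basis vector `e₁` and one row operation
then reduces `D S` to the diagonal matrix with `1 - 2 v ⬝ᵥ w = p` at index `1` and `1`
elsewhere.
-/

open Matrix

namespace Matrix

theorem one_sub_smul_vecMulVec_single {n R : Type*} [DecidableEq n] [Ring R] (i : n) (a : R) :
    1 - a • vecMulVec (Pi.single i 1) (Pi.single i 1) = diagonal (Function.update 1 i (1 - a)) := by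
  ext j k
  simp only [Matrix.sub_apply, Matrix.smul_apply, vecMulVec_apply, one_apply, diagonal_apply,
    Pi.single_apply, Function.update_apply, Pi.one_apply]
  split_ifs <;> simp_all

variable {l m n R : Type*} [Fintype l] [Fintype m] [Fintype n] [DecidableEq l] [DecidableEq m]
  [DecidableEq n] [CommRing R]

def UnimodEquiv (A B : Matrix m n R) : Prop :=
  ∃ (U : Matrix m m R) (V : Matrix n n R), IsUnit U.det ∧ IsUnit V.det ∧ U * A * V = B

namespace UnimodEquiv

theorem mul_left {U : Matrix m m R} (hU : IsUnit U.det) (A : Matrix m n R) :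
    UnimodEquiv A (U * A) :=
  ⟨U, 1, hU, by simp, Matrix.mul_one _⟩

theorem of_eq {A B : Matrix m n R} (h : A = B) : UnimodEquiv A B :=
  ⟨1, 1, by simp, by simp, by simp [h]⟩

theorem trans {A B C : Matrix m n R} (h₁ : UnimodEquiv A B) (h₂ : UnimodEquiv B C) :
    UnimodEquiv A C := by
  obtain ⟨U, V, hU, hV, rfl⟩ := h₁
  obtain ⟨U', V', hU', hV', rfl⟩ := h₂
  refine ⟨U' * U, V * V', ?_, ?_, ?_⟩
  · simpa only [det_mul] using hU'.mul hU
  · simpa only [det_mul] using hV.mul hV'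
  · simp only [Matrix.mul_assoc]

theorem smul {A B : Matrix m n R} (c : R) (h : UnimodEquiv A B) : UnimodEquiv (c • A) (c • B) := by
  obtain ⟨U, V, hU, hV, rfl⟩ := h
  exact ⟨U, V, hU, hV, by rw [Matrix.mul_smul, Matrix.smul_mul]⟩

theorem fromBlocks_one {A B : Matrix m n R} (h : UnimodEquiv A B) :
    UnimodEquiv (fromBlocks (1 : Matrix l l R) 0 0 A) (fromBlocks 1 0 0 B) := by
  obtain ⟨U, V, hU, hV, rfl⟩ := h
  refine ⟨fromBlocks 1 0 0 U, fromBlocks 1 0 0 V, ?_, ?_, ?_⟩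
  · simpa [det_fromBlocks_zero₂₁] using hU
  · simpa [det_fromBlocks_zero₂₁] using hV
  · simp [fromBlocks_multiply]

theorem submatrix (A : Matrix m n R) (σ : Equiv.Perm m) (τ : Equiv.Perm n) :
    UnimodEquiv A (A.submatrix σ τ) := by
  refine ⟨σ.permMatrix R, τ⁻¹.permMatrix R, ?_, ?_, ?_⟩
  · rw [det_permutation]; exact (Units.isUnit _).map (Int.castRingHom R)
  · rw [det_permutation]; exact (Units.isUnit _).map (Int.castRingHom R)
  · rw [PEquiv.toMatrix_toPEquiv_mul, PEquiv.mul_toMatrix_toPEquiv]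
    rfl

theorem diagonal_update_one (i j : m) (x : R) :
    UnimodEquiv (diagonal (Function.update (1 : m → R) i x))
      (diagonal (Function.update 1 j x)) := by
  convert submatrix _ (Equiv.swap i j) (Equiv.swap i j) using 1
  rw [submatrix_diagonal_equiv, Function.update_comp_equiv, Equiv.symm_swap, Equiv.swap_apply_left]
  rfl

end UnimodEquiv

theorem unimodEquiv_fromBlocks_one_schur (B : Matrix l n R) (C : Matrix n l R) (D : Matrix n n R) :
    UnimodEquiv (fromBlocks 1 B C D) (fromBlocks 1 0 0 (D - C * B)) := by
  refine ⟨fromBlocks 1 0 (-C) 1, fromBlocks 1 (-B) 0 1, ?_, ?_, ?_⟩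
  · simp
  · simp
  · simp [fromBlocks_multiply, sub_eq_neg_add]

theorem det_one_add_vecMulVec (u v : n → R) : (1 + vecMulVec u v).det = 1 + v ⬝ᵥ u := by
  rw [vecMulVec_eq Unit, det_one_add_replicateCol_mul_replicateRow]

/-- `W = 1 + (e - w) eᵀ` has inverse `1 + (w - e) eᵀ` and maps `w` to `e`, so conjugation by `W`
turns `1 - c w vᵀ` into `1 - c e v'ᵀ`; the row operation `1 + c e (v - (v ⬝ᵥ e) e)ᵀ` then clears
row `e` off the diagonal. -/
theorem unimodEquiv_one_sub_smul_vecMulVec {e w : n → R} (he : e ⬝ᵥ e = 1) (hw : e ⬝ᵥ w = 1)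
    (c : R) (v : n → R) :
    UnimodEquiv (1 - c • vecMulVec w v) (1 - (c * (v ⬝ᵥ w)) • vecMulVec e e) := by
  refine ⟨(1 + vecMulVec e (c • (v - (v ⬝ᵥ e) • e))) * (1 + vecMulVec (e - w) e),
    1 + vecMulVec (w - e) e, ?_, ?_, ?_⟩
  · rw [det_mul, det_one_add_vecMulVec, det_one_add_vecMulVec]
    simp [he, hw]
  · rw [det_one_add_vecMulVec]
    simp [he, hw]
  · simp only [Matrix.mul_add, Matrix.add_mul, Matrix.mul_sub, Matrix.sub_mul, Matrix.mul_one,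
      Matrix.one_mul, Matrix.smul_mul, Matrix.mul_smul, vecMulVec_mul_vecMulVec, he, hw,
      vecMulVec_smul, smul_sub, sub_vecMulVec, vecMulVec_sub]
    module

end Matrix

namespace SmithBlock

variable (p : ℕ)

def P : Matrix (Fin p) (Fin p) ℤ := Matrix.of fun i j =>
  if (i.val + 1) % 2 = 1 ∧ i.val < j.val then (-1 : ℤ) ^ (j.val + 1)
  else if (i.val + 1) % 2 = 0 ∧ j.val ≤ i.val then (-1 : ℤ) ^ (j.val + 1 + 1)
  else 0

def Q : Matrix (Fin p) (Fin p) ℤ := Matrix.of fun _ j => (-1 : ℤ) ^ (j.val + 1 + 1)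

def L : Matrix (Fin p) (Fin p) ℤ := Matrix.of fun i j => if i.val = j.val + 1 then 1 else 0

def schur : Matrix (Fin p) (Fin p) ℤ := Q p - (L p - 1) * P p

def altSign : Fin p → ℤ := fun j => (-1) ^ (j : ℕ)

def oddIndicator : Fin p → ℤ := fun i => if (i : ℕ) % 2 = 1 then 1 else 0

theorem L_mul_apply (A : Matrix (Fin p) (Fin p) ℤ) (i j : Fin p) :
    (L p * A) i j = if h : (i : ℕ) = 0 then 0 else A ⟨i - 1, by omega⟩ j := by
  rw [mul_apply]
  split_ifs with h
  · exact Finset.sum_eq_zero fun k _ => by simp [L, h]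
  · rw [Finset.sum_eq_single ⟨i - 1, by omega⟩ (fun k _ hk => ?_) (by simp)]
    · simp [L, Nat.sub_add_cancel (Nat.one_le_iff_ne_zero.mpr h)]
    · simp only [L, of_apply, ite_mul, one_mul, zero_mul, ite_eq_right_iff]
      exact fun hik => absurd (Fin.ext (by simp; omega)) hk

theorem schur_eq : schur p =
    diagonal (altSign p) + (2 : ℤ) • vecMulVec (oddIndicator p) (altSign p) := by
  ext i j
  simp only [schur, Matrix.sub_mul, Matrix.one_mul, Matrix.sub_apply, Matrix.add_apply,
    Matrix.smul_apply, L_mul_apply]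
  simp only [diagonal_apply, vecMulVec_apply, altSign, oddIndicator, Q, P, of_apply, pow_succ,
    mul_neg_one, neg_neg, Fin.ext_iff, smul_eq_mul]
  rcases Nat.even_or_odd (i : ℕ) with hi | hi <;> rcases Nat.even_or_odd (j : ℕ) with hj | hj <;>
    simp only [hi.neg_one_pow, hj.neg_one_pow] <;>
    simp only [Nat.even_iff, Nat.odd_iff] at hi hj <;>
    split_ifs <;> omega

theorem diagonal_altSign_mul_schur : diagonal (altSign p) * schur p =
    1 - (2 : ℤ) • vecMulVec (oddIndicator p) (altSign p) := by
  have hsq : (fun i => altSign p i * altSign p i) = 1 := by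
    ext i; simp [altSign, ← pow_add, ← two_mul]
  have hodd : diagonal (altSign p) *ᵥ oddIndicator p = -oddIndicator p := by
    ext i
    simp only [mulVec_diagonal, altSign, oddIndicator, Pi.neg_apply]
    split_ifs with h
    · rw [(Nat.odd_iff.mpr h).neg_one_pow, mul_one]
    · rw [mul_zero, neg_zero]
  rw [schur_eq, Matrix.mul_add, diagonal_mul_diagonal, hsq, Matrix.mul_smul, mul_vecMulVec, hodd,
    neg_vecMulVec]
  simp [sub_eq_add_neg]

theorem altSign_dotProduct_oddIndicator : altSign p ⬝ᵥ oddIndicator p = -(p / 2 : ℕ) := by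
  simp only [dotProduct, altSign, oddIndicator]
  rw [Fin.sum_univ_eq_sum_range (fun k => (-1 : ℤ) ^ k * if k % 2 = 1 then 1 else 0)]
  induction p with
  | zero => simp
  | succ n ih =>
    rw [Finset.sum_range_succ, ih]
    rcases Nat.mod_two_eq_zero_or_one n with h | h
    · rw [(Nat.even_iff.mpr h).neg_one_pow, if_neg (by omega)]
      omega
    · rw [(Nat.odd_iff.mpr h).neg_one_pow, if_pos h]
      omega

theorem schur_unimodEquiv_diagonal (hodd : Odd p) (h1 : 1 < p) :
    UnimodEquiv (schur p) (diagonal (Function.update 1 ⟨1, h1⟩ (p : ℤ))) := by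
  have hsign : IsUnit (diagonal (altSign p)).det := by
    rw [det_diagonal]
    exact IsUnit.prod_univ_iff.mpr fun i => isUnit_one.neg.pow _
  have he : Pi.single (⟨1, h1⟩ : Fin p) (1 : ℤ) ⬝ᵥ Pi.single ⟨1, h1⟩ 1 = 1 := by simp
  have hw : Pi.single (⟨1, h1⟩ : Fin p) (1 : ℤ) ⬝ᵥ oddIndicator p = 1 := by simp [oddIndicator]
  have hdet : 1 - 2 * altSign p ⬝ᵥ oddIndicator p = p := by
    rw [altSign_dotProduct_oddIndicator]
    have := Nat.two_mul_div_two_add_one_of_odd hodd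
    omega
  refine (UnimodEquiv.mul_left hsign _).trans ?_
  rw [diagonal_altSign_mul_schur]
  refine (unimodEquiv_one_sub_smul_vecMulVec he hw 2 (altSign p)).trans (.of_eq ?_)
  rw [one_sub_smul_vecMulVec_single, hdet]

end SmithBlock

/-- Let `p` be an odd prime and `P, Q, L` the `p×p` integer matrices (with `1`-based
indices) given by `L_{i,j} = δ_{i,j+1}`, `Q_{i,j} = (−1)^{j+1}`, and
`P_{i,j} = (−1)^j` if `i` is odd and `j > i`, `P_{i,j} = (−1)^{j+1}` if `i` is even and
`j ≤ i`, `P_{i,j} = 0` otherwise.  Then the `2p×2p` matrix `2·[[I, P],[L−I, Q]]` has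
Smith normal form `diag(2, …, 2, 2p)` (with `2` repeated `2p−1` times). -/
theorem smith_normal_form_block_matrix (p : ℕ) (hp : p.Prime) (hodd : Odd p) :
    let P : Matrix (Fin p) (Fin p) ℤ := Matrix.of fun i j =>
      if (i.val + 1) % 2 = 1 ∧ i.val < j.val then (-1 : ℤ) ^ (j.val + 1)
      else if (i.val + 1) % 2 = 0 ∧ j.val ≤ i.val then (-1 : ℤ) ^ (j.val + 1 + 1)
      else 0
    let Q : Matrix (Fin p) (Fin p) ℤ := Matrix.of fun _ j => (-1 : ℤ) ^ (j.val + 1 + 1)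
    let L : Matrix (Fin p) (Fin p) ℤ := Matrix.of fun i j =>
      if i.val = j.val + 1 then 1 else 0
    let M : Matrix (Fin p ⊕ Fin p) (Fin p ⊕ Fin p) ℤ :=
      (2 : ℤ) • Matrix.fromBlocks 1 P (L - 1) Q
    ∃ U V : Matrix (Fin p ⊕ Fin p) (Fin p ⊕ Fin p) ℤ,
      IsUnit U.det ∧ IsUnit V.det ∧
      U * M * V = Matrix.diagonal (fun c =>
        if c = Sum.inr ⟨p - 1, Nat.sub_lt hp.pos one_pos⟩ then (2 * p : ℤ) else 2) := by
  intro P Q L M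
  have h1 : 1 < p := hp.one_lt
  set last : Fin p := ⟨p - 1, Nat.sub_lt hp.pos one_pos⟩
  have hS : UnimodEquiv (Q - (L - 1) * P) (diagonal (Function.update 1 last (p : ℤ))) :=
    (SmithBlock.schur_unimodEquiv_diagonal p hodd h1).trans (UnimodEquiv.diagonal_update_one _ _ _)
  refine ((unimodEquiv_fromBlocks_one_schur P (L - 1) Q).trans hS.fromBlocks_one).smul 2
    |>.trans (.of_eq ?_)
  rw [← diagonal_one, fromBlocks_diagonal, ← diagonal_smul]
  congr 1
  funext c
  rcases c with c | c
  · rw [if_neg Sum.inl_ne_inr]; rfl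
  · simp only [Pi.smul_apply, Sum.elim_inr, Sum.inr.injEq, Function.update_apply]
    split_ifs <;> rfl
end
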